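/- arXiv:2408.16141 — 2 statements merged into one kernel-verified Lean document; each statement's English description precedes it below -/
import Mathlib

section
/- For f = e^{-φ} ∈ LCₙ, α > 0, and any fixed y ∈ ℝⁿ, the integral ∫_{ℝⁿ} φ(x) f(x)/|x−y|^{n−α} dx is finite (strictly between −∞ and +∞). -/
open MeasureTheory Real Filter
open scoped Topology ENNReal NNReal

noncomputable section

abbrev En (n : ℕ) : Type := EuclideanSpace ℝ (Fin n)

/-- Log-concavity in multiplicative form (handles zeros of `f`). -/
def IsLogConcave {n : ℕ} (f : En n → ℝ) : Prop :=
  ∀ (x y : En n) (t : ℝ), 0 ≤ t → t ≤ 1 →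
    f x ^ (1 - t) * f y ^ t ≤ f ((1 - t) • x + t • y)

/-- Membership in the class `LCₙ`: upper semi-continuous log-concave functions with
nonzero finite total mass. -/
def MemLC {n : ℕ} (f : En n → ℝ) : Prop :=
  (∀ x, 0 ≤ f x) ∧ UpperSemicontinuous f ∧ IsLogConcave f ∧
    Integrable f ∧ 0 < ∫ x, f x

/-- The Riesz `α`-energy `𝓘_α(f) = ∫∫ f(x) f(y) |x-y|^{α-n} dx dy`. -/
def rieszEnergy (n : ℕ) (α : ℝ) (f : En n → ℝ) : ℝ :=
  ∫ p : En n × En n, f p.1 * f p.2 * ‖p.1 - p.2‖ ^ (α - (n : ℝ))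

/-- The Riesz `α`-potential `I_α(f,y) = ∫ f(x) |x-y|^{α-n} dx`. -/
def rieszPotential (n : ℕ) (α : ℝ) (f : En n → ℝ) (y : En n) : ℝ :=
  ∫ x, f x * ‖x - y‖ ^ (α - (n : ℝ))

section Aux

variable {n : ℕ} {f : En n → ℝ}

lemma exists_level (hf : MemLC f) : ∃ t : ℝ, 0 < t ∧ 0 < volume {x : En n | t ≤ f x} := by
  obtain ⟨h0, husc, hlc, hint, hpos⟩ := hf
  by_contra h
  push_neg at h
  have hnull : ∀ t : ℝ, 0 < t → volume {x : En n | t ≤ f x} = 0 := fun t ht =>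
    le_antisymm (h t ht) zero_le
  have hU : volume {x : En n | 0 < f x} = 0 := by
    have hsub : {x : En n | 0 < f x} ⊆ ⋃ k : ℕ, {x : En n | 1/((k:ℝ)+1) ≤ f x} := by
      intro x hx
      obtain ⟨k, hk⟩ := exists_nat_one_div_lt (K := ℝ) hx
      exact Set.mem_iUnion.2 ⟨k, le_of_lt hk⟩
    refine measure_mono_null hsub (measure_iUnion_null fun k => hnull _ (by positivity))
  have hae : f =ᵐ[volume] (fun _ => (0:ℝ)) := by
    have : ∀ᵐ x, ¬ (0 < f x) := by
      rw [ae_iff]; simpa using hU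
    filter_upwards [this] with x hx
    exact le_antisymm (not_lt.1 hx) (h0 x)
  rw [integral_congr_ae hae, integral_zero] at hpos
  exact lt_irrefl _ hpos

lemma level_convex (hf : MemLC f) {t : ℝ} (ht : 0 < t) :
    Convex ℝ {x : En n | t ≤ f x} := by
  obtain ⟨h0, husc, hlc, hint, hpos⟩ := hf
  intro x hx y hy a b ha hb hab
  have hba : a = 1 - b := by linarith
  have := hlc x y b hb (by linarith)
  have h1 : t ≤ f x ^ (1 - b) * f y ^ b := by
    calc t = t ^ (1 - b) * t ^ b := by
          rw [← Real.rpow_add ht]; simp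
    _ ≤ f x ^ (1 - b) * f y ^ b := by
          apply mul_le_mul (Real.rpow_le_rpow ht.le hx (by linarith))
            (Real.rpow_le_rpow ht.le hy hb) (Real.rpow_nonneg ht.le _)
            (Real.rpow_nonneg (ht.le.trans hx) _)
    
  have : t ≤ f ((1-b) • x + b • y) := h1.trans this
  rw [hba]
  exact this

lemma exists_ball (hf : MemLC f) : ∃ t : ℝ, 0 < t ∧ ∃ p : En n, ∃ ε : ℝ, 0 < ε ∧
    Metric.ball p ε ⊆ {x : En n | t ≤ f x} := by
  obtain ⟨t, ht, hpos⟩ := exists_level hf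
  refine ⟨t, ht, ?_⟩
  have hconv := level_convex hf ht
  have hclosed : IsClosed {x : En n | t ≤ f x} := by
    have := hf.2.1
    rw [upperSemicontinuous_iff_isClosed_preimage] at this
    exact this t
  have hint : (interior {x : En n | t ≤ f x}).Nonempty := by
    by_contra hempty
    rw [Set.not_nonempty_iff_eq_empty] at hempty
    have hfr : frontier {x : En n | t ≤ f x} = {x : En n | t ≤ f x} := by
      rw [frontier, hclosed.closure_eq, hempty, Set.diff_empty]
    have := hconv.addHaar_frontier volume
    rw [hfr] at this
    rw [this] at hpos
    exact lt_irrefl _ hpos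
  obtain ⟨p, hp⟩ := hint
  obtain ⟨ε, hε, hball⟩ := Metric.isOpen_iff.1 isOpen_interior p hp
  exact ⟨p, ε, hε, hball.trans interior_subset⟩

lemma lc_bounded (hf : MemLC f) {t ε : ℝ} {p : En n} (ht : 0 < t) (hε : 0 < ε)
    (hball : Metric.ball p ε ⊆ {x : En n | t ≤ f x}) :
    ∃ M : ℝ, 0 < M ∧ ∀ x, f x ≤ M := by
  obtain ⟨h0, husc, hlc, hint, hpos⟩ := hf
  set V : ℝ := (volume (Metric.ball (0 : En n) (ε/2))).toReal with hV
  have hVpos : 0 < V := by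
    apply ENNReal.toReal_pos
    · exact (Metric.measure_ball_pos volume _ (by positivity)).ne'
    · exact measure_ball_lt_top.ne
  set I : ℝ := ∫ x, f x with hI
  refine ⟨max 1 ((I/V)^2/t), lt_max_of_lt_left one_pos, fun z => ?_⟩
  have key : Real.sqrt (t * f z) * V ≤ I := by
    set c : En n := (1/2 : ℝ) • (p + z) with hc
    have hmem : ∀ m ∈ Metric.ball c (ε/2), Real.sqrt (t * f z) ≤ f m := by
      intro m hm
      set u : En n := (2:ℝ) • m - z with hu
      have hum : u ∈ Metric.ball p ε := by
        rw [Metric.mem_ball] at hm ⊢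
        have : u - p = (2:ℝ) • (m - c) := by
          rw [hu, hc]; module
        rw [dist_eq_norm, this, norm_smul]
        rw [dist_eq_norm] at hm
        simp only [Real.norm_ofNat]
        linarith
      have htu : t ≤ f u := hball hum
      have h12 : ((1:ℝ) - 1/2) = 1/2 := by norm_num
      have hcomb := hlc u z (1/2) (by norm_num) (by norm_num)
      rw [h12] at hcomb
      have hmid : ((1:ℝ)/2) • u + ((1:ℝ)/2) • z = m := by
        rw [hu]; module
      rw [hmid] at hcomb
      calc Real.sqrt (t * f z) = Real.sqrt t * Real.sqrt (f z) := Real.sqrt_mul ht.le _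
        _ = t ^ ((1:ℝ)/2) * f z ^ ((1:ℝ)/2) := by
            rw [Real.sqrt_eq_rpow, Real.sqrt_eq_rpow]
        _ ≤ f u ^ ((1:ℝ)/2) * f z ^ ((1:ℝ)/2) :=
            mul_le_mul_of_nonneg_right (Real.rpow_le_rpow ht.le htu (by norm_num))
              (Real.rpow_nonneg (h0 z) _)
        _ ≤ f m := hcomb
    have hvc : volume (Metric.ball c (ε/2)) = volume (Metric.ball (0 : En n) (ε/2)) :=
      Measure.addHaar_ball_center _ _ _
    calc Real.sqrt (t * f z) * V = Real.sqrt (t * f z) * (volume (Metric.ball c (ε/2))).toReal := by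
          rw [hV, hvc]
      _ ≤ ∫ x in Metric.ball c (ε/2), f x :=
          setIntegral_ge_of_const_le_real Metric.isOpen_ball.measurableSet
            measure_ball_lt_top.ne hmem (hint.integrableOn)
      _ ≤ I := setIntegral_le_integral hint (ae_of_all _ h0)
  -- conclude
  have hiv : Real.sqrt (t * f z) ≤ I / V := by
    rw [le_div_iff₀ hVpos]; exact key
  have hIV : 0 ≤ I / V := le_trans (Real.sqrt_nonneg _) hiv
  have : t * f z ≤ (I/V)^2 := by
    have := Real.sqrt_le_sqrt (Real.sq_sqrt (mul_nonneg ht.le (h0 z)) ▸ le_refl (t * f z))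
    nlinarith [Real.sq_sqrt (mul_nonneg ht.le (h0 z)), Real.sqrt_nonneg (t * f z)]
  have : f z ≤ (I/V)^2 / t := by
    rw [le_div_iff₀ ht] at *
    nlinarith
  exact this.trans (le_max_right _ _)

set_option maxHeartbeats 1000000 in
lemma lc_level_bounded (hf : MemLC f) {t ε : ℝ} {p : En n} (ht : 0 < t) (hε : 0 < ε)
    (hball : Metric.ball p ε ⊆ {x : En n | t ≤ f x}) :
    ∃ D : ℝ, 0 < D ∧ ∀ z, t * Real.exp (-1) ≤ f z → ‖z - p‖ ≤ D := by
  obtain ⟨h0, husc, hlc, hint, hpos⟩ := hf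
  set θ : ℝ := t * Real.exp (-1) with hθ
  have hθpos : 0 < θ := by positivity
  have hθt : θ ≤ t := by
    rw [hθ]
    nlinarith [Real.exp_lt_one_iff.2 (by norm_num : (-1:ℝ) < 0), Real.exp_pos (-1:ℝ)]
  set K : Set (En n) := {x : En n | θ ≤ f x} with hK
  have hKfin : volume K < ⊤ := hint.measure_ge_lt_top hθpos
  set V : ℝ := (volume (Metric.ball (0 : En n) (ε/2))).toReal with hV
  have hVpos : 0 < V := by
    apply ENNReal.toReal_pos
    · exact (Metric.measure_ball_pos volume _ (by positivity)).ne'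
    · exact measure_ball_lt_top.ne
  set A : ℝ := (volume K).toReal with hA
  refine ⟨2*ε*A/V + 1, by positivity, fun z hz => ?_⟩
  set d : ℝ := ‖z - p‖ with hd
  rcases eq_or_lt_of_le (norm_nonneg (z - p)) with h0d | h0d
  · have hd0 : d = 0 := h0d.symm
    rw [hd0]; positivity
  have h0d' : (0:ℝ) < d := h0d
  set N : ℕ := ⌊d/(2*ε)⌋₊ with hN
  -- the balls
  set c : ℕ → En n := fun k => p + ((k*ε)/d) • (z - p) with hc
  have hs_le : ∀ k ∈ Finset.range (N+1), (k*ε)/d ≤ 1/2 := by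
    intro k hk
    rw [Finset.mem_range] at hk
    have hkN : (k:ℝ) ≤ N := by exact_mod_cast Nat.lt_succ_iff.1 hk
    have hNle : (N:ℝ) ≤ d/(2*ε) := Nat.floor_le (by positivity)
    have h1 : (k:ℝ)*ε ≤ d/2 := by
      calc (k:ℝ)*ε ≤ (d/(2*ε))*ε := by nlinarith
        _ = d/2 := by field_simp
    rw [div_le_iff₀ h0d']
    linarith
  have hsub : ∀ k ∈ Finset.range (N+1), Metric.ball (c k) (ε/2) ⊆ K := by
    intro k hk m hm
    set s : ℝ := (k*ε)/d with hs
    have hs0 : 0 ≤ s := by positivity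
    have hs2 : s ≤ 1/2 := hs_le k hk
    have h1s : (1:ℝ)/2 ≤ 1 - s := by linarith
    set u : En n := p + (1-s)⁻¹ • (m - c k) with hu
    have hum : u ∈ Metric.ball p ε := by
      rw [Metric.mem_ball, dist_eq_norm] at hm ⊢
      have : u - p = (1-s)⁻¹ • (m - c k) := by rw [hu]; abel
      rw [this, norm_smul]
      have h1 : ‖m - c k‖ < ε/2 := hm
      have h2 : ‖(1-s)⁻¹‖ ≤ 2 := by
        rw [Real.norm_eq_abs, abs_inv, abs_of_pos (by linarith : (0:ℝ) < 1 - s)]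
        rw [inv_le_comm₀ (by linarith) (by norm_num)]
        linarith
      calc ‖(1-s)⁻¹‖ * ‖m - c k‖ ≤ 2 * ‖m - c k‖ :=
            mul_le_mul_of_nonneg_right h2 (norm_nonneg _)
        _ < ε := by linarith
    have htu : t ≤ f u := hball hum
    have hcomb := hlc u z s hs0 (by linarith)
    have hmid : (1 - s) • u + s • z = m := by
      have hck : c k = p + s • (z - p) := rfl
      have hsne : (1 - s) ≠ 0 := by intro h; rw [h] at h1s; norm_num at h1s
      rw [hu, hck]
      rw [smul_add, smul_smul, mul_inv_cancel₀ hsne, one_smul]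
      module
    rw [hmid] at hcomb
    have : θ ≤ f u ^ (1-s) * f z ^ s := by
      calc θ = t * Real.exp (-1) := rfl
        _ ≤ t * Real.exp (-s) := by
            have : Real.exp (-1) ≤ Real.exp (-s) := Real.exp_le_exp.2 (by linarith)
            nlinarith
        _ = t ^ (1-s) * (t ^ s * Real.exp (-1) ^ s) := by
            have e1 : Real.exp (-1) ^ s = Real.exp (-s) := by
              rw [← Real.exp_mul]; norm_num
            rw [e1, ← mul_assoc, ← Real.rpow_add ht, show (1-s)+s = (1:ℝ) by ring,
              Real.rpow_one]
        _ = t ^ (1-s) * (t * Real.exp (-1)) ^ s := by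
            rw [Real.mul_rpow ht.le (Real.exp_pos _).le]
        _ ≤ f u ^ (1-s) * f z ^ s := by
            apply mul_le_mul (Real.rpow_le_rpow ht.le htu (by linarith))
              (Real.rpow_le_rpow hθpos.le hz hs0) (Real.rpow_nonneg hθpos.le _)
              (Real.rpow_nonneg (h0 u) _)
    exact Set.mem_setOf_eq ▸ this.trans hcomb
  have hdisj : (↑(Finset.range (N+1)) : Set ℕ).PairwiseDisjoint
      (fun k => Metric.ball (c k) (ε/2)) := by
    intro j hj k hk hjk
    apply Metric.ball_disjoint_ball
    have : dist (c j) (c k) = |(j:ℝ) - k| * ε := by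
      rw [dist_eq_norm, hc]
      have : (p + ((j*ε)/d) • (z - p)) - (p + ((k*ε)/d) • (z - p))
          = (((j*ε)/d) - ((k*ε)/d)) • (z - p) := by module
      rw [this, norm_smul, ← hd]
      have h3 : ((j:ℝ)*ε)/d - ((k:ℝ)*ε)/d = ((j:ℝ)-k)*ε/d := by ring
      rw [h3, Real.norm_eq_abs, abs_div, abs_of_pos h0d', abs_mul, abs_of_pos hε,
        div_mul_cancel₀ _ h0d'.ne']
    rw [this]
    have hjk1 : (1:ℝ) ≤ |(j:ℝ) - k| := by
      have : j ≠ k := hjk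
      rcases lt_or_gt_of_ne this with h | h
      · rw [abs_sub_comm, abs_of_pos (by exact_mod_cast sub_pos.2 (by exact_mod_cast h : (j:ℝ) < k))]
        have : (j:ℝ) + 1 ≤ k := by exact_mod_cast h
        linarith
      · rw [abs_of_pos (by exact_mod_cast sub_pos.2 (by exact_mod_cast h : (k:ℝ) < j))]
        have : (k:ℝ) + 1 ≤ j := by exact_mod_cast h
        linarith
    nlinarith
  have hsum : ((N:ℝ≥0∞)+1) * volume (Metric.ball (0 : En n) (ε/2)) ≤ volume K := by
    have hbun := measure_biUnion_finset (μ := (volume : Measure (En n))) hdisj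
      (fun k _ => Metric.isOpen_ball.measurableSet)
    calc ((N:ℝ≥0∞)+1) * volume (Metric.ball (0 : En n) (ε/2))
        = ∑ k ∈ Finset.range (N+1), volume (Metric.ball (c k) (ε/2)) := by
          rw [Finset.sum_congr rfl (fun k _ => Measure.addHaar_ball_center volume (c k) (ε/2))]
          rw [Finset.sum_const, Finset.card_range, nsmul_eq_mul]
          push_cast
          ring
      _ = volume (⋃ k ∈ Finset.range (N+1), Metric.ball (c k) (ε/2)) := hbun.symm
      _ ≤ volume K := measure_mono (Set.iUnion₂_subset hsub)
  -- convert to reals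
  have hreal : ((N:ℝ)+1) * V ≤ A := by
    have h1 : (((N:ℝ≥0∞)+1) * volume (Metric.ball (0 : En n) (ε/2))).toReal ≤ A := by
      rw [hA]
      exact ENNReal.toReal_mono hKfin.ne hsum
    rw [ENNReal.toReal_mul] at h1
    rw [show ((N:ℝ≥0∞)+1) = ((N+1 : ℕ) : ℝ≥0∞) by push_cast; ring, ENNReal.toReal_natCast] at h1
    simpa using h1
  have hdlt : d < 2*ε*((N:ℝ)+1) := by
    have := Nat.lt_floor_add_one (d/(2*ε))
    rw [← hN] at this
    calc d = (d/(2*ε))*(2*ε) := by field_simp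
      _ < ((N:ℝ)+1)*(2*ε) := by nlinarith
      _ = 2*ε*((N:ℝ)+1) := by ring
  have : (N:ℝ)+1 ≤ A/V := by rwa [le_div_iff₀ hVpos]
  calc d ≤ 2*ε*((N:ℝ)+1) := hdlt.le
    _ ≤ 2*ε*(A/V) := by nlinarith
    _ = 2*ε*A/V := by ring
    _ ≤ 2*ε*A/V + 1 := by linarith

lemma lc_decay (hf : MemLC f) : ∃ C c : ℝ, 0 < C ∧ 0 < c ∧
    ∀ z : En n, f z ≤ C * Real.exp (-c * ‖z‖) := by
  obtain ⟨t, ht, p, ε, hε, hball⟩ := exists_ball hf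
  obtain ⟨M, hM, hMb⟩ := lc_bounded hf ht hε hball
  obtain ⟨D, hD, hDb⟩ := lc_level_bounded hf ht hε hball
  have h0 : ∀ x, 0 ≤ f x := hf.1
  have hlc : IsLogConcave f := hf.2.2.1
  have hfp : t ≤ f p := hball (Metric.mem_ball_self hε)
  set R : ℝ := max D 1 with hR
  have hRpos : (0:ℝ) < R := lt_max_of_lt_right one_pos
  set c : ℝ := 1/(2*R) with hc
  have hcpos : 0 < c := by positivity
  set C : ℝ := (max M t) * Real.exp (1 + c*‖p‖) with hC
  have hMt : (0:ℝ) < max M t := lt_max_of_lt_right ht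
  refine ⟨C, c, by positivity, hcpos, fun z => ?_⟩
  set d : ℝ := ‖z - p‖ with hd
  have hzd : ‖z‖ ≤ d + ‖p‖ := by
    calc ‖z‖ = ‖(z - p) + p‖ := by rw [sub_add_cancel]
      _ ≤ ‖z - p‖ + ‖p‖ := norm_add_le _ _
  rcases le_or_gt d (2*R) with hcase | hcase
  · -- bounded region
    calc f z ≤ max M t := le_max_of_le_left (hMb z)
      _ = (max M t) * Real.exp (1 + c*‖p‖) * Real.exp (-(1 + c*‖p‖)) := by
          rw [mul_assoc, ← Real.exp_add, show 1 + c*‖p‖ + -(1 + c*‖p‖) = (0:ℝ) by ring,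
            Real.exp_zero, mul_one]
      _ ≤ C * Real.exp (-c * ‖z‖) := by
          rw [hC]
          apply mul_le_mul_of_nonneg_left _ (by positivity)
          apply Real.exp_le_exp.2
          have : c * d ≤ c * (2*R) := by nlinarith
          have hc2R : c * (2*R) = 1 := by rw [hc]; field_simp
          nlinarith [mul_le_mul_of_nonneg_left hzd hcpos.le]
  · -- decay region
    have hdpos : (0:ℝ) < d := lt_trans (by positivity) hcase
    set s : ℝ := (2*R)/d with hs
    have hs0 : 0 < s := by positivity
    have hs1 : s < 1 := by rw [hs, div_lt_one hdpos]; exact hcase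
    set w : En n := p + s • (z - p) with hw
    have hwp : ‖w - p‖ = 2*R := by
      rw [hw]
      have : p + s • (z - p) - p = s • (z - p) := by abel
      rw [this, norm_smul, Real.norm_eq_abs, abs_of_pos hs0, ← hd, hs]
      field_simp
    have hwf : f w < t * Real.exp (-1) := by
      by_contra hcon
      push_neg at hcon
      have := hDb w hcon
      rw [hwp] at this
      have h2R : (2:ℝ)*R ≤ R := this.trans (le_max_left D 1)
      nlinarith
    have hcomb := hlc p z s hs0.le hs1.le
    have hwid : (1 - s) • p + s • z = w := by rw [hw]; module
    rw [hwid] at hcomb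
    have hkey : t ^ (1-s) * f z ^ s ≤ t * Real.exp (-1) := by
      calc t ^ (1-s) * f z ^ s ≤ f p ^ (1-s) * f z ^ s := by
            apply mul_le_mul_of_nonneg_right (Real.rpow_le_rpow ht.le hfp (by linarith))
              (Real.rpow_nonneg (h0 z) _)
        _ ≤ f w := hcomb
        _ ≤ t * Real.exp (-1) := hwf.le
    have hfz : f z ≤ t * Real.exp (-1/s) := by
      have h1 : f z ^ s ≤ t ^ s * Real.exp (-1) := by
        have ht1s : (0:ℝ) < t ^ (1-s) := Real.rpow_pos_of_pos ht _
        rw [← le_div_iff₀' ht1s] at hkey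
        calc f z ^ s ≤ t * Real.exp (-1) / t ^ (1-s) := hkey
          _ = t ^ s * Real.exp (-1) := by
              rw [div_eq_iff ht1s.ne']
              rw [mul_comm (t ^ s) _, mul_assoc, ← Real.rpow_add ht]
              rw [show s + (1-s) = (1:ℝ) by ring, Real.rpow_one]
              ring
      have h2 : (f z ^ s) ^ s⁻¹ ≤ (t ^ s * Real.exp (-1)) ^ s⁻¹ :=
        Real.rpow_le_rpow (Real.rpow_nonneg (h0 z) _) h1 (by positivity)
      rw [Real.rpow_rpow_inv (h0 z) hs0.ne'] at h2
      calc f z ≤ (t ^ s * Real.exp (-1)) ^ s⁻¹ := h2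
        _ = t * Real.exp (-1/s) := by
            rw [Real.mul_rpow (Real.rpow_nonneg ht.le _) (Real.exp_pos _).le,
              ← Real.rpow_mul ht.le, mul_inv_cancel₀ hs0.ne', Real.rpow_one,
              ← Real.exp_mul]
            ring_nf

    calc f z ≤ t * Real.exp (-1/s) := hfz
      _ ≤ C * Real.exp (-c * ‖z‖) := by
          rw [hC]
          have e1 : -1/s = -c * d := by
            rw [hc, hs]; field_simp
          rw [e1]
          have e2 : -c * d ≤ c*‖p‖ + (-c * ‖z‖) := by
            nlinarith [mul_le_mul_of_nonneg_left hzd hcpos.le]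
          calc t * Real.exp (-c*d) ≤ (max M t) * Real.exp (c*‖p‖ + (-c * ‖z‖)) := by
                apply mul_le_mul (le_max_right M t) (Real.exp_le_exp.2 e2)
                  (Real.exp_pos _).le hMt.le
            _ ≤ (max M t) * Real.exp (1 + c*‖p‖) * Real.exp (-c * ‖z‖) := by
                rw [mul_assoc, ← Real.exp_add]
                apply mul_le_mul_of_nonneg_left (Real.exp_le_exp.2 (by linarith)) hMt.le

lemma abs_log_mul_self_le {u b : ℝ} (hu : 0 ≤ u) (hub : u ≤ b) :
    |(-Real.log u) * u| ≤ 2 * b ^ ((1:ℝ)/2) + b^2 := by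
  have hb : 0 ≤ b := hu.trans hub
  rcases eq_or_lt_of_le hu with h0 | h0
  · rw [← h0]; simp; positivity
  have habs : |(-Real.log u) * u| = |Real.log u| * u := by
    rw [abs_mul, abs_neg, abs_of_pos h0]
  rw [habs]
  have hlog : |Real.log u| ≤ 2 * u ^ (-(1:ℝ)/2) + u := by
    rcases le_or_gt 0 (Real.log u) with hl | hl
    · rw [abs_of_nonneg hl]
      have := Real.log_le_sub_one_of_pos h0
      have hpow : (0:ℝ) ≤ 2 * u ^ (-(1:ℝ)/2) := by positivity
      linarith
    · rw [abs_of_neg hl]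
      have h1 : Real.log (u ^ (-(1:ℝ)/2)) ≤ u ^ (-(1:ℝ)/2) - 1 :=
        Real.log_le_sub_one_of_pos (Real.rpow_pos_of_pos h0 _)
      rw [Real.log_rpow h0] at h1
      nlinarith [Real.rpow_pos_of_pos h0 (-(1:ℝ)/2)]
  have hmul : |Real.log u| * u ≤ 2 * u ^ ((1:ℝ)/2) + u^2 := by
    have e1 : u ^ (-(1:ℝ)/2) * u = u ^ ((1:ℝ)/2) := by
      nth_rewrite 2 [← Real.rpow_one u]
      rw [← Real.rpow_add h0]
      norm_num
    calc |Real.log u| * u ≤ (2 * u ^ (-(1:ℝ)/2) + u) * u :=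
          mul_le_mul_of_nonneg_right hlog hu
      _ = 2 * (u ^ (-(1:ℝ)/2) * u) + u^2 := by ring
      _ = 2 * u ^ ((1:ℝ)/2) + u^2 := by rw [e1]
  refine hmul.trans ?_
  have : u ^ ((1:ℝ)/2) ≤ b ^ ((1:ℝ)/2) := Real.rpow_le_rpow hu hub (by norm_num)
  nlinarith [pow_le_pow_left₀ hu hub 2]

lemma integrableOn_riesz_ball {β : ℝ} (hβ : -(n:ℝ) < β) (y : En n) :
    IntegrableOn (fun x : En n => ‖x - y‖ ^ β) (Metric.ball y 1) volume := by
  have hmeas : Measurable fun x : En n => ‖x - y‖ ^ β := by fun_prop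
  rcases le_or_gt 0 β with hβ0 | hβ0
  · -- bounded case
    apply Measure.integrableOn_of_bounded (M := 1) measure_ball_lt_top.ne
      hmeas.aestronglyMeasurable
    rw [ae_restrict_iff' Metric.isOpen_ball.measurableSet]
    filter_upwards with x hx
    rw [Metric.mem_ball, dist_eq_norm] at hx
    rw [Real.norm_eq_abs, abs_of_nonneg (Real.rpow_nonneg (norm_nonneg _) _)]
    exact Real.rpow_le_one (norm_nonneg _) hx.le hβ0
  · -- singular case: layer cake
    have hn : 0 < n := by
      by_contra hn
      push_neg at hn
      interval_cases n
      · simp at hβ; linarith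
    have hβne : β ≠ 0 := hβ0.ne
    constructor
    · exact hmeas.aestronglyMeasurable.restrict
    · rw [hasFiniteIntegral_iff_norm]
      have hnorm : ∀ x : En n, ENNReal.ofReal ‖‖x - y‖ ^ β‖ = ENNReal.ofReal (‖x - y‖ ^ β) := by
        intro x
        rw [Real.norm_eq_abs, abs_of_nonneg (Real.rpow_nonneg (norm_nonneg _) _)]
      simp_rw [hnorm]
      rw [lintegral_eq_lintegral_meas_le _
        (ae_of_all _ fun x => Real.rpow_nonneg (norm_nonneg _) _)
        (hmeas.aemeasurable.restrict)]
      have hsub : ∀ t : ℝ, 0 < t →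
          {a : En n | t ≤ ‖a - y‖ ^ β} ⊆ Metric.closedBall y (t ^ β⁻¹) := by
        intro t ht a ha
        simp only [Set.mem_setOf_eq] at ha
        rcases eq_or_lt_of_le (norm_nonneg (a - y)) with h0 | h0
        · have : ‖a - y‖ ^ β = 0 := by rw [← h0, Real.zero_rpow hβne]
          rw [this] at ha; linarith
        · rw [Metric.mem_closedBall, dist_eq_norm]
          exact (Real.le_rpow_inv_iff_of_neg h0 ht hβ0).2 ha
      set μb : Measure (En n) := volume.restrict (Metric.ball y 1) with hμb
      have hbound1 : ∀ t ∈ Set.Ioc (0:ℝ) 1, μb {a : En n | t ≤ ‖a - y‖ ^ β}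
          ≤ volume (Metric.ball y 1) := by
        intro t ht
        rw [hμb, Measure.restrict_apply']
        · exact measure_mono Set.inter_subset_right
        · exact Metric.isOpen_ball.measurableSet
      have hbound2 : ∀ t ∈ Set.Ioi (1:ℝ), μb {a : En n | t ≤ ‖a - y‖ ^ β}
          ≤ ENNReal.ofReal (t ^ (β⁻¹ * n)) *
            ENNReal.ofReal (Real.sqrt π ^ n / Real.Gamma ((n:ℝ) / 2 + 1)) := by
        intro t ht
        rw [Set.mem_Ioi] at ht
        have ht0 : (0:ℝ) < t := by linarith
        calc μb {a : En n | t ≤ ‖a - y‖ ^ β}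
            ≤ volume (Metric.closedBall y (t ^ β⁻¹)) := by
              rw [hμb, Measure.restrict_apply' Metric.isOpen_ball.measurableSet]
              exact (measure_mono (Set.inter_subset_left)).trans
                (measure_mono (hsub t ht0))
          _ = ENNReal.ofReal (t ^ β⁻¹) ^ n *
              ENNReal.ofReal (Real.sqrt π ^ n / Real.Gamma ((n:ℝ) / 2 + 1)) := by
              have : Nonempty (Fin n) := ⟨⟨0, hn⟩⟩
              rw [EuclideanSpace.volume_closedBall (Fin n) y (t ^ β⁻¹)]
              simp [Fintype.card_fin]
          _ = ENNReal.ofReal (t ^ (β⁻¹ * n)) *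
              ENNReal.ofReal (Real.sqrt π ^ n / Real.Gamma ((n:ℝ) / 2 + 1)) := by
              congr 1
              rw [← ENNReal.ofReal_pow (Real.rpow_nonneg ht0.le _)]
              congr 1
              rw [← Real.rpow_natCast (t ^ β⁻¹) n, ← Real.rpow_mul ht0.le]
      calc ∫⁻ t in Set.Ioi (0:ℝ), μb {a : En n | t ≤ ‖a - y‖ ^ β}
          ≤ ∫⁻ t in Set.Ioc (0:ℝ) 1 ∪ Set.Ioi 1, μb {a : En n | t ≤ ‖a - y‖ ^ β} :=
            lintegral_mono_set Set.Ioi_subset_Ioc_union_Ioi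
        _ ≤ (∫⁻ t in Set.Ioc (0:ℝ) 1, μb {a : En n | t ≤ ‖a - y‖ ^ β})
            + ∫⁻ t in Set.Ioi (1:ℝ), μb {a : En n | t ≤ ‖a - y‖ ^ β} :=
            lintegral_union_le _ _ _
        _ < ⊤ := by
            apply ENNReal.add_lt_top.2
            constructor
            · calc ∫⁻ t in Set.Ioc (0:ℝ) 1, μb {a : En n | t ≤ ‖a - y‖ ^ β}
                  ≤ ∫⁻ _ in Set.Ioc (0:ℝ) 1, volume (Metric.ball y 1) :=
                    setLIntegral_mono' measurableSet_Ioc hbound1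
                _ = volume (Metric.ball y 1) * volume (Set.Ioc (0:ℝ) 1) := by
                    rw [setLIntegral_const]
                _ < ⊤ := by
                    apply ENNReal.mul_lt_top measure_ball_lt_top
                    simp [Real.volume_Ioc]
            · calc ∫⁻ t in Set.Ioi (1:ℝ), μb {a : En n | t ≤ ‖a - y‖ ^ β}
                  ≤ ∫⁻ t in Set.Ioi (1:ℝ), ENNReal.ofReal (t ^ (β⁻¹ * n)) *
                    ENNReal.ofReal (Real.sqrt π ^ n / Real.Gamma ((n:ℝ) / 2 + 1)) :=
                    setLIntegral_mono' measurableSet_Ioi hbound2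
                _ = (∫⁻ t in Set.Ioi (1:ℝ), ENNReal.ofReal (t ^ (β⁻¹ * n))) *
                    ENNReal.ofReal (Real.sqrt π ^ n / Real.Gamma ((n:ℝ) / 2 + 1)) := by
                    rw [lintegral_mul_const' _ _ ENNReal.ofReal_ne_top]
                _ < ⊤ := by
                    apply ENNReal.mul_lt_top _ ENNReal.ofReal_lt_top
                    apply IntegrableOn.setLIntegral_lt_top
                    apply integrableOn_Ioi_rpow_of_lt _ one_pos
                    have hβn : β⁻¹ * ↑n * β = (n:ℝ) := by field_simp
                    nlinarith [hβn, hβ0, hβ]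

lemma exp_mul_rpow_tail {c : ℝ} (hc : 0 < c) {m : ℕ} (hm : 0 < m) {r : ℝ} (hr : 1 ≤ r)
    (β : ℝ) : Real.exp (-(c*r)) * r ^ β ≤ ((m:ℝ)/c)^m * r ^ (β - (m:ℝ)) := by
  have hr0 : 0 < r := lt_of_lt_of_le one_pos hr
  have hm0 : (0:ℝ) < m := by exact_mod_cast hm
  have key : (c*r/m)^m ≤ Real.exp (c*r) := by
    have e1 : Real.exp (c*r) = Real.exp (c*r/m)^m := by
      rw [← Real.exp_nat_mul]
      congr 1
      field_simp
    rw [e1]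
    exact pow_le_pow_left₀ (by positivity)
      (by linarith [Real.add_one_le_exp (c*r/(m:ℝ))]) m
  have h2 : r ^ ((m:ℕ):ℝ) * Real.exp (-(c*r)) ≤ ((m:ℝ)/c)^m := by
    rw [Real.rpow_natCast]
    have hmc : ((m:ℝ)/c)^m * (c*r/m)^m = r^m := by
      rw [← mul_pow]
      congr 1
      field_simp
    calc r^m * Real.exp (-(c*r)) = ((m:ℝ)/c)^m * ((c*r/m)^m * Real.exp (-(c*r))) := by
          rw [← mul_assoc, hmc]
      _ ≤ ((m:ℝ)/c)^m * (Real.exp (c*r) * Real.exp (-(c*r))) := by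
          apply mul_le_mul_of_nonneg_left _ (by positivity)
          exact mul_le_mul_of_nonneg_right key (Real.exp_pos _).le
      _ = ((m:ℝ)/c)^m := by rw [← Real.exp_add]; simp
  have hsplit : r ^ ((m:ℕ):ℝ) * r ^ (β - m) = r ^ β := by
    rw [← Real.rpow_add hr0, show ((m:ℕ):ℝ) + (β - m) = β by ring]
  calc Real.exp (-(c*r)) * r ^ β = (r ^ ((m:ℕ):ℝ) * Real.exp (-(c*r))) * r ^ (β - m) := by
        rw [mul_comm (r ^ ((m:ℕ):ℝ)) (Real.exp _), mul_assoc, hsplit]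
    _ ≤ ((m:ℝ)/c)^m * r ^ (β - m) := mul_le_mul_of_nonneg_right h2 (Real.rpow_nonneg hr0.le _)

lemma integrable_exp_riesz {β c : ℝ} (hβ : -(n:ℝ) < β) (hc : 0 < c) (y : En n) :
    Integrable (fun x : En n => Real.exp (-(c * ‖x - y‖)) * ‖x - y‖ ^ β) := by
  have hmeas : Measurable fun x : En n => Real.exp (-(c * ‖x - y‖)) * ‖x - y‖ ^ β := by
    fun_prop
  rw [← integrableOn_univ, ← Set.union_compl_self (Metric.ball y 1)]
  apply IntegrableOn.union
  · -- near the singularity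
    apply Integrable.mono' (integrableOn_riesz_ball hβ y) hmeas.aestronglyMeasurable.restrict
    filter_upwards with x
    rw [Real.norm_eq_abs, abs_mul, abs_of_pos (Real.exp_pos _),
      abs_of_nonneg (Real.rpow_nonneg (norm_nonneg _) _)]
    calc Real.exp (-(c * ‖x - y‖)) * ‖x - y‖ ^ β ≤ 1 * ‖x - y‖ ^ β := by
          apply mul_le_mul_of_nonneg_right _ (Real.rpow_nonneg (norm_nonneg _) _)
          exact Real.exp_le_one_iff.2 (neg_nonpos.2 (by positivity))
      _ = ‖x - y‖ ^ β := one_mul _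
  · -- the tail
    set m : ℕ := ⌈β⌉₊ + n + 1 with hm
    have hmpos : 0 < m := by omega
    set K : ℝ := ((m:ℝ)/c)^m * (2*(1+‖y‖)) ^ ((n:ℝ)+1) with hK
    have hKpos : 0 < K := by positivity
    have hnr : ((Module.finrank ℝ (En n)):ℝ) < (n:ℝ)+1 := by
      rw [finrank_euclideanSpace_fin]; linarith
    apply Integrable.mono' (((integrable_one_add_norm hnr).const_mul K).integrableOn)
      hmeas.aestronglyMeasurable.restrict
    rw [ae_restrict_iff' Metric.isOpen_ball.measurableSet.compl]
    filter_upwards with x hx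
    rw [Set.mem_compl_iff, Metric.mem_ball, dist_eq_norm, not_lt] at hx
    set r : ℝ := ‖x - y‖ with hr
    have hr1 : 1 ≤ r := hx
    have hr0 : 0 < r := lt_of_lt_of_le one_pos hr1
    rw [Real.norm_eq_abs, abs_mul, abs_of_pos (Real.exp_pos _),
      abs_of_nonneg (Real.rpow_nonneg (norm_nonneg _) _)]
    have step1 : Real.exp (-(c * r)) * r ^ β ≤ ((m:ℝ)/c)^m * r ^ (β - (m:ℝ)) :=
      exp_mul_rpow_tail hc hmpos hr1 β
    have step2 : r ^ (β - (m:ℝ)) ≤ r ^ (-((n:ℝ)+1)) := by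
      apply Real.rpow_le_rpow_of_exponent_le hr1
      have : β ≤ (⌈β⌉₊ : ℝ) := Nat.le_ceil β
      rw [hm]
      push_cast
      linarith
    have step3 : r ^ (-((n:ℝ)+1)) ≤ (2*(1+‖y‖)) ^ ((n:ℝ)+1) * (1+‖x‖) ^ (-((n:ℝ)+1)) := by
      have hxy : 1 + ‖x‖ ≤ 2*(1+‖y‖) * r := by
        have h1 : ‖x‖ ≤ ‖x - y‖ + ‖y‖ := by
          calc ‖x‖ = ‖(x - y) + y‖ := by rw [sub_add_cancel]
            _ ≤ ‖x - y‖ + ‖y‖ := norm_add_le _ _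
        nlinarith [norm_nonneg y, norm_nonneg (x - y)]
      have h1x : (0:ℝ) < 1 + ‖x‖ := by positivity
      have hpow : (1+‖x‖) ^ ((n:ℝ)+1) ≤ (2*(1+‖y‖)) ^ ((n:ℝ)+1) * r ^ ((n:ℝ)+1) := by
        rw [← Real.mul_rpow (by positivity) hr0.le]
        exact Real.rpow_le_rpow h1x.le hxy (by positivity)
      have hrp : (0:ℝ) < r ^ ((n:ℝ)+1) := Real.rpow_pos_of_pos hr0 _
      have hxp : (0:ℝ) < (1+‖x‖) ^ ((n:ℝ)+1) := Real.rpow_pos_of_pos h1x _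
      rw [Real.rpow_neg hr0.le, Real.rpow_neg h1x.le, ← div_eq_mul_inv, ← one_div,
        div_le_div_iff₀ hrp hxp]
      linarith [hpow]
    calc Real.exp (-(c * r)) * r ^ β ≤ ((m:ℝ)/c)^m * r ^ (-((n:ℝ)+1)) := by
          refine step1.trans (mul_le_mul_of_nonneg_left step2 (by positivity))
      _ ≤ ((m:ℝ)/c)^m * ((2*(1+‖y‖)) ^ ((n:ℝ)+1) * (1+‖x‖) ^ (-((n:ℝ)+1))) := by
          exact mul_le_mul_of_nonneg_left step3 (by positivity)
      _ = K * (1+‖x‖) ^ (-((n:ℝ)+1)) := by rw [hK]; ring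

end Aux

/-- for `f = e^{-φ} ∈ LCₙ` and fixed `y`, the integral
`∫ φ(x) f(x)|x-y|^{α-n} dx` is finite; here `φ(x)f(x) = -log(f x) * f x`
(interpreted as `0` where `f` vanishes, since `Real.log 0 = 0`). -/
theorem stmt5 {n : ℕ} (α : ℝ) (hα : 0 < α) (f : En n → ℝ) (hf : MemLC f)
    (y : En n) :
    Integrable (fun x => (-Real.log (f x)) * f x * ‖x - y‖ ^ (α - (n : ℝ))) := by
  obtain ⟨C, c, hC, hc, hdecay⟩ := lc_decay hf
  have h0 := hf.1
  have hint := hf.2.2.2.1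
  set β : ℝ := α - n with hβdef
  have hβ : -(n:ℝ) < β := by rw [hβdef]; linarith
  set K : ℝ := 2 * C ^ ((1:ℝ)/2) + C^2 with hKdef
  have hKpos : 0 < K := by positivity
  set c2 : ℝ := c/2 with hc2
  have hc2pos : 0 < c2 := by positivity
  have hbound : ∀ x : En n, |(-Real.log (f x)) * f x| ≤ K * Real.exp (-(c2 * ‖x‖)) := by
    intro x
    have hb := hdecay x
    have h1 := abs_log_mul_self_le (h0 x) hb
    refine h1.trans ?_
    set r : ℝ := ‖x‖ with hr
    have hrn : (0:ℝ) ≤ r := norm_nonneg x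
    have e1 : (C * Real.exp (-c * r)) ^ ((1:ℝ)/2)
        = C ^ ((1:ℝ)/2) * Real.exp (-(c2 * r)) := by
      rw [Real.mul_rpow hC.le (Real.exp_pos _).le, ← Real.exp_mul, hc2]
      ring_nf
    have e2 : (C * Real.exp (-c * r))^2 ≤ C^2 * Real.exp (-(c2 * r)) := by
      have e3 : (C * Real.exp (-c * r))^2 = C^2 * Real.exp (-c*r + -c*r) := by
        rw [Real.exp_add]; ring
      rw [e3]
      apply mul_le_mul_of_nonneg_left _ (by positivity)
      apply Real.exp_le_exp.2
      rw [hc2]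
      nlinarith
    calc 2 * (C * Real.exp (-c * r)) ^ ((1:ℝ)/2) + (C * Real.exp (-c * r))^2
        ≤ 2 * (C ^ ((1:ℝ)/2) * Real.exp (-(c2 * r))) + C^2 * Real.exp (-(c2 * r)) := by
          rw [e1]; linarith
      _ = K * Real.exp (-(c2 * r)) := by rw [hKdef]; ring
  set K2 : ℝ := K * Real.exp (c2 * ‖y‖) with hK2
  have hdom : Integrable (fun x : En n =>
      K2 * (Real.exp (-(c2 * ‖x - y‖)) * ‖x - y‖ ^ β)) :=
    (integrable_exp_riesz hβ hc2pos y).const_mul K2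
  have hmeas : AEStronglyMeasurable
      (fun x : En n => (-Real.log (f x)) * f x * ‖x - y‖ ^ β) volume := by
    have hfm : AEMeasurable f (volume : Measure (En n)) := hint.aemeasurable
    have hrm : Measurable fun x : En n => ‖x - y‖ ^ β := by fun_prop
    exact (((Real.measurable_log.comp_aemeasurable hfm).neg.mul hfm).mul
      hrm.aemeasurable).aestronglyMeasurable
  apply Integrable.mono' hdom hmeas
  filter_upwards with x
  have hrpnn : (0:ℝ) ≤ ‖x - y‖ ^ β := Real.rpow_nonneg (norm_nonneg _) _
  rw [Real.norm_eq_abs, abs_mul, abs_of_nonneg hrpnn]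
  have hexp : Real.exp (-(c2 * ‖x‖)) ≤ Real.exp (c2 * ‖y‖) * Real.exp (-(c2 * ‖x - y‖)) := by
    rw [← Real.exp_add]
    apply Real.exp_le_exp.2
    have : ‖x - y‖ ≤ ‖x‖ + ‖y‖ := norm_sub_le x y
    nlinarith
  calc |(-Real.log (f x)) * f x| * ‖x - y‖ ^ β
      ≤ (K * Real.exp (-(c2 * ‖x‖))) * ‖x - y‖ ^ β :=
        mul_le_mul_of_nonneg_right (hbound x) hrpnn
    _ ≤ (K * (Real.exp (c2 * ‖y‖) * Real.exp (-(c2 * ‖x - y‖)))) * ‖x - y‖ ^ β := by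
        apply mul_le_mul_of_nonneg_right _ hrpnn
        exact mul_le_mul_of_nonneg_left hexp hKpos.le
    _ = K2 * (Real.exp (-(c2 * ‖x - y‖)) * ‖x - y‖ ^ β) := by rw [hK2]; ring
end
end

section
/- Let μ be an even finite Borel measure on ℝⁿ not concentrated on any linear subspace (so ∫|⟨x,u⟩| dμ > c_μ > 0 for all unit u), let φ: ℝⁿ → ℝ ∪ {+∞} be an even nonnegative convex function with φ(o) = 0, and suppose 𝓘_α(e^{-φ*}) ≥ τ. Then ∫_{ℝⁿ} φ dμ ≥ (c_μ/2)·(𝓘_α(e^{-φ*})/(e²𝓘_α(e^{-|·|})))^{1/(n+α)} − μ(ℝⁿ). -/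
open MeasureTheory Real Filter
open scoped Topology ENNReal NNReal

noncomputable section

/-- Legendre transform of an extended-real-valued function. -/
def erealConj {n : ℕ} (φ : En n → EReal) (y : En n) : EReal :=
  ⨆ x : En n, (((inner ℝ x y : ℝ) : EReal) + (-(φ x)))

/-- `-log f`, valued `+∞` where `f` vanishes. -/
def nlog {n : ℕ} (f : En n → ℝ) : En n → EReal :=
  fun x => if f x = 0 then (⊤ : EReal) else ((- Real.log (f x) : ℝ) : EReal)

/-- `e^{-a}` for extended reals, with `e^{-∞} = 0`. -/
def expNeg : EReal → ℝ := fun a => if a = ⊤ then 0 else Real.exp (-(a.toReal))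

/-- The support function `h_f = φ*` of a log-concave function `f = e^{-φ}`. -/
def suppConj {n : ℕ} (f : En n → ℝ) : En n → EReal := erealConj (nlog f)

/-- The Asplund sum `f ⊕ t•g = e^{-(φ* + tψ*)*}`. -/
def asplund {n : ℕ} (f g : En n → ℝ) (t : ℝ) : En n → ℝ :=
  fun x => expNeg (erealConj (fun y => suppConj f y + (t : EReal) * suppConj g y) x)

/-- `δ𝓘_α(f,g) = D`, i.e. the one-sided limit `(1/2) lim_{t→0⁺} (𝓘_α(f⊕t•g)-𝓘_α(f))/t = D`. -/
def deltaRiesz (n : ℕ) (α : ℝ) (f g : En n → ℝ) (D : ℝ) : Prop :=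
  Filter.Tendsto (fun t : ℝ => (rieszEnergy n α (asplund f g t) - rieszEnergy n α f) / (2 * t))
    (𝓝[>] (0:ℝ)) (𝓝 D)

/-!
Write `f = e^{-φ*}`. Since `φ ≥ 0` and `φ(0) = 0`, the transform `φ*` is nonnegative and
`φ*(t y) ≤ t φ*(y)` for `t ∈ [0, 1]`. If `φ* > 1` on the whole sphere of radius `r`, this forces
`φ*(z) ≥ |z|/r - 1`, i.e. `f ≤ e · e^{-|·|/r}`, and scaling gives
`𝓘_α(f) ≤ e² r^{n+α} 𝓘_α(e^{-|·|})`. For `r` half the radius in the statement this bound fails,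
so some `y` with `|y| = r` has `φ*(y) ≤ 1`, that is `φ(x) ≥ ⟨x, y⟩ - 1`; by evenness
`φ(x) ≥ |⟨x, y⟩| - 1`, and integrating against `μ` gives `∫ φ dμ ≥ r c_μ - μ(ℝⁿ)`.
-/

instance (n : ℕ) : (volume : Measure (En n × En n)).IsAddHaarMeasure :=
  Measure.prod.instIsAddHaarMeasure _ _

section LegendreTransform

variable {n : ℕ} {φ : En n → ℝ}

theorem coe_inner_sub_le_erealConj (x y : En n) :
    ((inner ℝ x y - φ x : ℝ) : EReal) ≤ erealConj (fun x => (φ x : EReal)) y := by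
  rw [EReal.coe_sub, sub_eq_add_neg]
  exact le_iSup (fun x => ((inner ℝ x y : ℝ) : EReal) + -(φ x : EReal)) x

theorem erealConj_le_coe_iff {y : En n} {s : ℝ} :
    erealConj (fun x => (φ x : EReal)) y ≤ s ↔ ∀ x, inner ℝ x y - φ x ≤ s := by
  refine ⟨fun h x => EReal.coe_le_coe_iff.mp ((coe_inner_sub_le_erealConj x y).trans h),
    fun h => iSup_le fun x => ?_⟩
  rw [← sub_eq_add_neg, ← EReal.coe_sub]
  exact EReal.coe_le_coe_iff.mpr (h x)

theorem erealConj_nonneg (h0 : φ 0 ≤ 0) (y : En n) :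
    0 ≤ erealConj (fun x => (φ x : EReal)) y :=
  (EReal.coe_nonneg.mpr (by simpa using h0)).trans (coe_inner_sub_le_erealConj 0 y)

theorem erealConj_smul_le (hnn : ∀ x, 0 ≤ φ x) {t s : ℝ} (ht0 : 0 ≤ t) (ht1 : t ≤ 1) {y : En n}
    (h : erealConj (fun x => (φ x : EReal)) y ≤ s) :
    erealConj (fun x => (φ x : EReal)) (t • y) ≤ (t * s : ℝ) := by
  rw [erealConj_le_coe_iff] at h ⊢
  intro x
  rw [real_inner_smul_right]
  nlinarith [mul_le_mul_of_nonneg_left (h x) ht0, mul_nonneg (sub_nonneg.mpr ht1) (hnn x)]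

theorem coe_norm_div_sub_one_le_erealConj (hnn : ∀ x, 0 ≤ φ x) (h0 : φ 0 ≤ 0) {r : ℝ}
    (hr : 0 < r) (hsphere : ∀ y : En n, ‖y‖ = r → 1 < erealConj (fun x => (φ x : EReal)) y)
    (z : En n) : ((‖z‖ / r - 1 : ℝ) : EReal) ≤ erealConj (fun x => (φ x : EReal)) z := by
  rcases le_or_gt ‖z‖ r with hz | hz
  · refine le_trans ?_ (erealConj_nonneg h0 z)
    exact EReal.coe_nonpos.mpr (sub_nonpos.mpr ((div_le_one hr).mpr hz))
  · refine le_trans (EReal.coe_le_coe_iff.mpr (sub_le_self _ zero_le_one)) (not_lt.mp fun hlt => ?_)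
    have hz0 : 0 < ‖z‖ := hr.trans hz
    have hscaled := erealConj_smul_le hnn (div_pos hr hz0).le
      ((div_le_one hz0).mpr hz.le) hlt.le
    rw [show r / ‖z‖ * (‖z‖ / r) = 1 by field_simp, EReal.coe_one] at hscaled
    refine (hsphere _ ?_).not_ge hscaled
    rw [norm_smul, Real.norm_of_nonneg (div_pos hr hz0).le, div_mul_cancel₀ _ hz0.ne']

end LegendreTransform

theorem expNeg_nonneg (a : EReal) : 0 ≤ expNeg a := by
  unfold expNeg
  split_ifs <;> positivity

theorem expNeg_le_exp_neg {a : EReal} {s : ℝ} (h : (s : EReal) ≤ a) : expNeg a ≤ exp (-s) := by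
  unfold expNeg
  split_ifs with ha
  · positivity
  · have hbot : a ≠ ⊥ := ne_bot_of_le_ne_bot (EReal.coe_ne_bot s) h
    rw [← EReal.coe_toReal ha hbot, EReal.coe_le_coe_iff] at h
    exact exp_le_exp.mpr (neg_le_neg h)

section RieszEnergy

variable {n : ℕ} {α : ℝ}

def rieszIntegrand (n : ℕ) (α : ℝ) (f : En n → ℝ) (p : En n × En n) : ℝ :=
  f p.1 * f p.2 * ‖p.1 - p.2‖ ^ (α - (n : ℝ))

theorem rieszEnergy_eq_integral (f : En n → ℝ) :
    rieszEnergy n α f = ∫ p, rieszIntegrand n α f p :=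
  rfl

theorem rieszIntegrand_nonneg {f : En n → ℝ} (hf : ∀ x, 0 ≤ f x) (p : En n × En n) :
    0 ≤ rieszIntegrand n α f p :=
  mul_nonneg (mul_nonneg (hf _) (hf _)) (rpow_nonneg (norm_nonneg _) _)

theorem rieszEnergy_nonneg {f : En n → ℝ} (hf : ∀ x, 0 ≤ f x) : 0 ≤ rieszEnergy n α f :=
  integral_nonneg (rieszIntegrand_nonneg hf)

theorem rieszIntegrand_const_mul_comp_inv_smul (g : En n → ℝ) (c : ℝ) {r : ℝ} (hr : 0 < r) :
    rieszIntegrand n α (fun z => c * g (r⁻¹ • z)) =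
      fun p => c ^ 2 * r ^ (α - n) * rieszIntegrand n α g (r⁻¹ • p) := by
  funext p
  have hr' : r ^ (α - n) ≠ 0 := (rpow_pos_of_pos hr _).ne'
  simp only [rieszIntegrand, Prod.smul_fst, Prod.smul_snd, ← smul_sub, norm_smul,
    Real.norm_of_nonneg (inv_nonneg.mpr hr.le), mul_rpow (inv_nonneg.mpr hr.le) (norm_nonneg _),
    inv_rpow hr.le]
  field_simp

theorem integrable_rieszIntegrand_const_mul_comp_inv_smul {g : En n → ℝ}
    (hg : Integrable (rieszIntegrand n α g)) (c : ℝ) {r : ℝ} (hr : 0 < r) :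
    Integrable (rieszIntegrand n α (fun z => c * g (r⁻¹ • z))) := by
  rw [rieszIntegrand_const_mul_comp_inv_smul g c hr]
  exact ((integrable_comp_smul_iff volume _ (inv_ne_zero hr.ne')).mpr hg).const_mul _

theorem rieszEnergy_const_mul_comp_inv_smul (g : En n → ℝ) (c : ℝ) {r : ℝ} (hr : 0 < r) :
    rieszEnergy n α (fun z => c * g (r⁻¹ • z)) = c ^ 2 * r ^ (n + α) * rieszEnergy n α g := by
  have hfinrank : Module.finrank ℝ (En n × En n) = n + n := by
    rw [Module.finrank_prod, finrank_euclideanSpace_fin]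
  have hpow : r ^ (α - n) * r ^ (n + n) = r ^ (n + α) := by
    rw [← rpow_natCast, ← rpow_add hr]
    push_cast
    ring_nf
  rw [rieszEnergy_eq_integral, rieszIntegrand_const_mul_comp_inv_smul g c hr, integral_const_mul,
    Measure.integral_comp_inv_smul_of_nonneg volume _ hr.le, hfinrank, smul_eq_mul,
    rieszEnergy_eq_integral, ← hpow]
  ring

theorem rieszEnergy_le_of_le {f g : En n → ℝ} (hf : ∀ x, 0 ≤ f x) (hfg : ∀ x, f x ≤ g x)
    (hg : Integrable (rieszIntegrand n α g)) : rieszEnergy n α f ≤ rieszEnergy n α g := by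
  refine integral_mono_of_nonneg (.of_forall (rieszIntegrand_nonneg hf)) hg (.of_forall fun p => ?_)
  exact mul_le_mul_of_nonneg_right
    (mul_le_mul (hfg _) (hfg _) (hf _) ((hf _).trans (hfg _))) (rpow_nonneg (norm_nonneg _) _)

end RieszEnergy

theorem exists_norm_eq_erealConj_le_one {n : ℕ} {α : ℝ} {φ : En n → ℝ} (hnn : ∀ x, 0 ≤ φ x)
    (h0 : φ 0 ≤ 0) {r : ℝ} (hr : 0 < r)
    (hI : Integrable (rieszIntegrand n α fun x => exp (-‖x‖)))
    (hlt : exp 2 * r ^ (n + α) * rieszEnergy n α (fun x : En n => exp (-‖x‖)) <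
      rieszEnergy n α (fun y => expNeg (erealConj (fun x => (φ x : EReal)) y))) :
    ∃ y : En n, ‖y‖ = r ∧ erealConj (fun x => (φ x : EReal)) y ≤ 1 := by
  by_contra! hsphere
  have hbound (z : En n) : expNeg (erealConj (fun x => (φ x : EReal)) z) ≤
      exp 1 * exp (-‖r⁻¹ • z‖) := by
    refine (expNeg_le_exp_neg (coe_norm_div_sub_one_le_erealConj hnn h0 hr hsphere z)).trans_eq ?_
    rw [← exp_add, norm_smul, Real.norm_of_nonneg (inv_nonneg.mpr hr.le), inv_mul_eq_div]
    ring_nf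
  refine hlt.not_ge ?_
  calc rieszEnergy n α (fun y => expNeg (erealConj (fun x => (φ x : EReal)) y))
      ≤ rieszEnergy n α (fun z => exp 1 * exp (-‖r⁻¹ • z‖)) :=
        rieszEnergy_le_of_le (fun _ => expNeg_nonneg _) hbound
          (integrable_rieszIntegrand_const_mul_comp_inv_smul hI _ hr)
    _ = exp 2 * r ^ (n + α) * rieszEnergy n α (fun x : En n => exp (-‖x‖)) := by
        rw [rieszEnergy_const_mul_comp_inv_smul (fun x => exp (-‖x‖)) _ hr, exp_one_pow]
        norm_num

theorem abs_inner_sub_one_le {n : ℕ} {φ : En n → ℝ} (heven : ∀ x, φ (-x) = φ x) {y : En n}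
    (hy : erealConj (fun x => (φ x : EReal)) y ≤ 1) (x : En n) :
    |inner ℝ x y| - 1 ≤ φ x := by
  have h := (erealConj_le_coe_iff (s := 1)).mp (by exact_mod_cast hy)
  have hneg := h (-x)
  rw [inner_neg_left, heven] at hneg
  rw [sub_le_iff_le_add, abs_le]
  constructor <;> linarith [h x]

theorem integral_abs_inner_eq_norm_mul {n : ℕ} (μ : Measure (En n)) (y : En n) :
    ∫ x, |inner ℝ x y| ∂μ = ‖y‖ * ∫ x, |inner ℝ x (‖y‖⁻¹ • y)| ∂μ := by
  rw [← integral_const_mul]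
  congr 1 with x
  rcases eq_or_ne y 0 with rfl | hy
  · simp
  · rw [real_inner_smul_right, abs_mul, abs_inv, abs_norm,
      mul_inv_cancel_left₀ (norm_ne_zero_iff.mpr hy)]

theorem norm_mul_sub_measure_le_integral {n : ℕ} (μ : Measure (En n)) [IsFiniteMeasure μ]
    {c : ℝ} (hμ : ∀ u : En n, ‖u‖ = 1 → c < ∫ x, |inner ℝ x u| ∂μ) {φ : En n → ℝ}
    (heven : ∀ x, φ (-x) = φ x) (hint : Integrable φ μ) {y : En n}
    (hy : erealConj (fun x => (φ x : EReal)) y ≤ 1) :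
    ‖y‖ * c - (μ Set.univ).toReal ≤ ∫ x, φ x ∂μ := by
  have hle := abs_inner_sub_one_le heven hy
  have habs : Integrable (fun x => |inner ℝ x y|) μ := by
    refine (hint.add (integrable_const 1)).mono' (by fun_prop) (.of_forall fun x => ?_)
    rw [Real.norm_eq_abs, abs_abs, Pi.add_apply]
    linarith [hle x]
  have hc : ‖y‖ * c ≤ ∫ x, |inner ℝ x y| ∂μ := by
    rw [integral_abs_inner_eq_norm_mul]
    rcases eq_or_ne y 0 with rfl | hy0
    · simp
    · refine mul_le_mul_of_nonneg_left (hμ _ ?_).le (norm_nonneg _)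
      rw [norm_smul, norm_inv, norm_norm, inv_mul_cancel₀ (norm_ne_zero_iff.mpr hy0)]
  calc ‖y‖ * c - (μ Set.univ).toReal ≤ ∫ x, (|inner ℝ x y| - 1) ∂μ := by
        rw [integral_sub habs (integrable_const 1), integral_const, smul_eq_mul, mul_one,
          measureReal_def]
        linarith
    _ ≤ ∫ x, φ x ∂μ := integral_mono (habs.sub (integrable_const 1)) hint hle

theorem mul_rpow_one_div_div_two_rpow_lt {a b p : ℝ} (ha : 0 < a) (hb : 0 < b) (hp : 0 < p) :
    b * ((a / b) ^ (1 / p) / 2) ^ p < a := by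
  rw [div_rpow (rpow_nonneg (div_pos ha hb).le _) zero_le_two, ← rpow_mul (div_pos ha hb).le,
    one_div_mul_cancel hp.ne', rpow_one, mul_div_assoc', mul_div_cancel₀ _ hb.ne']
  exact div_lt_self ha (one_lt_rpow one_lt_two hp)

theorem stmt17_general {n : ℕ} (α : ℝ) (hα : 0 < α)
    (μ : Measure (En n)) [IsFiniteMeasure μ]
    (cμ : ℝ)
    (hμnc : ∀ u : En n, ‖u‖ = 1 → cμ < ∫ x, |(inner ℝ x u : ℝ)| ∂μ)
    (φ : En n → ℝ)
    (heven : ∀ x, φ (-x) = φ x) (hnn : ∀ x, 0 ≤ φ x) (hφ0 : φ 0 = 0)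
    (hint : Integrable φ μ) :
    (cμ / 2) *
        (rieszEnergy n α (fun y => expNeg (erealConj (fun x => ((φ x : ℝ) : EReal)) y)) /
          (Real.exp 2 * rieszEnergy n α (fun x : En n => Real.exp (-‖x‖))))
          ^ (1 / ((n : ℝ) + α)) -
      (μ Set.univ).toReal
    ≤ ∫ x, φ x ∂μ := by
  set A := rieszEnergy n α (fun y => expNeg (erealConj (fun x => ((φ x : ℝ) : EReal)) y))
  set I := rieszEnergy n α (fun x : En n => Real.exp (-‖x‖))
  set ρ := (A / (exp 2 * I)) ^ (1 / ((n : ℝ) + α))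
  have hA : 0 ≤ A := rieszEnergy_nonneg fun _ => expNeg_nonneg _
  have hI : 0 ≤ I := rieszEnergy_nonneg fun _ => (exp_pos _).le
  rcases (show 0 ≤ ρ by positivity).eq_or_lt with hρ | hρ
  · rw [← hρ, mul_zero, zero_sub]
    exact (neg_nonpos.mpr ENNReal.toReal_nonneg).trans (integral_nonneg hnn)
  have hAI : A ≠ 0 ∧ exp 2 * I ≠ 0 := div_ne_zero_iff.mp fun h => by
    simp only [ρ, h, zero_rpow (by positivity : 1 / ((n : ℝ) + α) ≠ 0), lt_self_iff_false] at hρ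
  have hlt : exp 2 * (ρ / 2) ^ ((n : ℝ) + α) * I < A := by
    rw [mul_right_comm]
    exact mul_rpow_one_div_div_two_rpow_lt (hA.lt_of_ne' hAI.1)
      ((mul_nonneg (exp_pos 2).le hI).lt_of_ne' hAI.2) (by positivity)
  obtain ⟨y, hy, hyconj⟩ := exists_norm_eq_erealConj_le_one hnn hφ0.le (half_pos hρ)
    (Integrable.of_integral_ne_zero (right_ne_zero_of_mul hAI.2)) hlt
  have hbound := norm_mul_sub_measure_le_integral μ hμnc heven hint hyconj
  rw [hy] at hbound
  linarith

/-- Lemma 6.3: lower bound for `∫ φ dμ` in terms of `𝓘_α(e^{-φ*})`. -/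
theorem stmt17 {n : ℕ} (α : ℝ) (hα : 0 < α)
    (μ : Measure (En n)) [IsFiniteMeasure μ]
    (hμeven : μ.map (fun x => -x) = μ)
    (cμ : ℝ) (hcμ : 0 < cμ)
    (hμnc : ∀ u : En n, ‖u‖ = 1 → cμ < ∫ x, |(inner ℝ x u : ℝ)| ∂μ)
    (φ : En n → ℝ) (hconv : ConvexOn ℝ Set.univ φ)
    (heven : ∀ x, φ (-x) = φ x) (hnn : ∀ x, 0 ≤ φ x) (hφ0 : φ 0 = 0)
    (hint : Integrable φ μ)
    (τ : ℝ)
    (hτ : τ ≤ rieszEnergy n α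
      (fun y => expNeg (erealConj (fun x => ((φ x : ℝ) : EReal)) y))) :
    (cμ / 2) *
        (rieszEnergy n α (fun y => expNeg (erealConj (fun x => ((φ x : ℝ) : EReal)) y)) /
          (Real.exp 2 * rieszEnergy n α (fun x : En n => Real.exp (-‖x‖))))
          ^ (1 / ((n : ℝ) + α)) -
      (μ Set.univ).toReal
    ≤ ∫ x, φ x ∂μ :=
  stmt17_general α hα μ cμ hμnc φ heven hnn hφ0 hint
end
end
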